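/- Let f : ℝⁿ → ℝ be twice continuously differentiable with L-Lipschitz Hessian, let m > 0 and α ∈ (0, 1/2), and let H be a real symmetric n×n matrix with m·I ⪯ H and ∇²f(x) ⪯ H at a point x ∈ ℝⁿ. Set Δx = −H⁻¹∇f(x). If ‖∇f(x)‖ ≤ (3m²/L)(1 − 2α), then the Armijo condition with unit step size holds: f(x + Δx) ≤ f(x) + α⟨∇f(x), Δx⟩. -/

import Mathlib

/-!
Write `g = ∇f(x)`, `Δ = -H⁻¹g` and `S = ⟪Δ, HΔ⟫ = -⟪g, Δ⟫`. Since the Hessian is `L`-Lipschitz,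
the second directional derivative of `f` along `t ↦ x + tΔ` grows at most like `L‖Δ‖³t`, so
`f(x + Δ) ≤ f(x) - S + ⟪Δ, ∇²f(x)Δ⟫/2 + L‖Δ‖³/6 ≤ f(x) - S/2 + L‖Δ‖³/6`, using `∇²f(x) ⪯ H`.
From `m‖Δ‖² ≤ S ≤ ‖Δ‖‖g‖` we get `m‖Δ‖ ≤ ‖g‖`, and the bound on `‖g‖` turns this into
`L‖Δ‖ ≤ 3m(1 - 2α)`, hence `L‖Δ‖³/6 ≤ (1/2 - α)S`, which is the Armijo inequality
`f(x + Δ) ≤ f(x) - αS`.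
-/

open scoped InnerProductSpace

open Set

theorem hasDerivAt_quadratic (a b c t : ℝ) :
    HasDerivAt (fun s => a + b * s + c * s ^ 2 / 2) (b + c * t) t := by
  refine ((((hasDerivAt_id' t).const_mul b).const_add a).fun_add
    (((hasDerivAt_pow 2 t).const_mul c).div_const 2)).congr_deriv ?_
  push_cast
  ring

theorem hasDerivAt_cubic (a b c d t : ℝ) :
    HasDerivAt (fun s => a + b * s + c * s ^ 2 / 2 + d * s ^ 3 / 6)
      (b + c * t + d * t ^ 2 / 2) t := by
  refine ((hasDerivAt_quadratic a b c t).fun_add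
    (((hasDerivAt_pow 3 t).const_mul d).div_const 6)).congr_deriv ?_
  push_cast
  ring

theorem le_taylor_two_of_deriv2_le_add_mul {φ φ' φ'' : ℝ → ℝ} {C : ℝ}
    (hφ : ∀ t, HasDerivAt φ (φ' t) t) (hφ' : ∀ t, HasDerivAt φ' (φ'' t) t)
    (hC : ∀ t ∈ Icc (0 : ℝ) 1, φ'' t ≤ φ'' 0 + C * t) :
    φ 1 ≤ φ 0 + φ' 0 + φ'' 0 / 2 + C / 6 := by
  have hφ'_le : ∀ t ∈ Icc (0 : ℝ) 1, φ' t ≤ φ' 0 + φ'' 0 * t + C * t ^ 2 / 2 :=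
    image_le_of_deriv_right_le_deriv_boundary
      (fun t _ => (hφ' t).continuousAt.continuousWithinAt)
      (fun t _ => (hφ' t).hasDerivWithinAt) (by simp)
      (fun t _ => (hasDerivAt_quadratic _ _ _ t).continuousAt.continuousWithinAt)
      (fun t _ => (hasDerivAt_quadratic _ _ _ t).hasDerivWithinAt)
      (fun t ht => hC t (Ico_subset_Icc_self ht))
  have := image_le_of_deriv_right_le_deriv_boundary
      (fun t _ => (hφ t).continuousAt.continuousWithinAt)
      (fun t _ => (hφ t).hasDerivWithinAt) (by simp)
      (fun t _ => (hasDerivAt_cubic (φ 0) (φ' 0) (φ'' 0) C t).continuousAt.continuousWithinAt)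
      (fun t _ => (hasDerivAt_cubic _ _ _ _ t).hasDerivWithinAt)
      (fun t ht => hφ'_le t (Ico_subset_Icc_self ht)) (right_mem_Icc.2 zero_le_one)
  simpa using this

section LineRestriction

variable {E : Type*} [NormedAddCommGroup E] [NormedSpace ℝ E] {f : E → ℝ}

theorem hasDerivAt_add_smul (x v : E) (t : ℝ) : HasDerivAt (fun s : ℝ => x + s • v) v t := by
  simpa using ((hasDerivAt_id t).smul_const v).const_add x

theorem ContDiff.hasDerivAt_comp_add_smul (hf : ContDiff ℝ 2 f) (x v : E) (t : ℝ) :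
    HasDerivAt (fun s : ℝ => f (x + s • v)) (fderiv ℝ f (x + t • v) v) t := by
  exact ((hf.differentiable two_ne_zero) (x + t • v)).hasFDerivAt.comp_hasDerivAt t
    (hasDerivAt_add_smul x v t)

theorem ContDiff.hasDerivAt_fderiv_add_smul (hf : ContDiff ℝ 2 f) (x v : E) (t : ℝ) :
    HasDerivAt (fun s : ℝ => fderiv ℝ f (x + s • v) v)
      (iteratedFDeriv ℝ 2 f (x + t • v) ![v, v]) t := by
  have hf' : ContDiff ℝ 1 (fderiv ℝ f) := hf.fderiv_right (by norm_num)
  have hD : HasDerivAt (fun s : ℝ => fderiv ℝ f (x + s • v))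
      (fderiv ℝ (fderiv ℝ f) (x + t • v) v) t :=
    (hf'.differentiable one_ne_zero _).hasFDerivAt.comp_hasDerivAt t (hasDerivAt_add_smul x v t)
  have h := hD.clm_apply (hasDerivAt_const t v)
  rw [map_zero, add_zero] at h
  rw [iteratedFDeriv_two_apply]
  exact h

theorem ContDiff.le_taylor_two_of_iteratedFDeriv_le (hf : ContDiff ℝ 2 f) (x v : E) {C : ℝ}
    (hC : ∀ t ∈ Icc (0 : ℝ) 1,
      iteratedFDeriv ℝ 2 f (x + t • v) ![v, v] ≤ iteratedFDeriv ℝ 2 f x ![v, v] + C * t) :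
    f (x + v) ≤ f x + fderiv ℝ f x v + iteratedFDeriv ℝ 2 f x ![v, v] / 2 + C / 6 := by
  simpa using le_taylor_two_of_deriv2_le_add_mul (hf.hasDerivAt_comp_add_smul x v)
    (hf.hasDerivAt_fderiv_add_smul x v) (by simpa using hC)

end LineRestriction

theorem mul_norm_le_norm_of_mul_sq_le_inner {F : Type*} [NormedAddCommGroup F]
    [InnerProductSpace ℝ F] {v w : F} {m : ℝ} (h : m * ‖v‖ ^ 2 ≤ ⟪v, w⟫_ℝ) :
    m * ‖v‖ ≤ ‖w‖ := by
  rcases (norm_nonneg v).eq_or_lt with hv | hv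
  · simp [← hv]
  · have := h.trans (real_inner_le_norm v w)
    nlinarith

theorem ContinuousLinearMap.real_inner_apply_le_opNorm_mul_sq {F : Type*} [NormedAddCommGroup F]
    [InnerProductSpace ℝ F] (T : F →L[ℝ] F) (v : F) : ⟪v, T v⟫_ℝ ≤ ‖T‖ * ‖v‖ ^ 2 :=
  calc ⟪v, T v⟫_ℝ ≤ ‖v‖ * ‖T v‖ := real_inner_le_norm v (T v)
    _ ≤ ‖v‖ * (‖T‖ * ‖v‖) := by gcongr; exact T.le_opNorm v
    _ = ‖T‖ * ‖v‖ ^ 2 := by ring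

namespace Matrix

variable {n : Type*} [Fintype n] [DecidableEq n]

theorem PosSemidef.inner_toEuclideanLin_le {A B : Matrix n n ℝ} (h : (A - B).PosSemidef)
    (v : EuclideanSpace ℝ n) : ⟪v, toEuclideanLin B v⟫_ℝ ≤ ⟪v, toEuclideanLin A v⟫_ℝ := by
  have := (isPositive_toEuclideanLin_iff.mpr h).inner_nonneg_right v
  rw [map_sub, LinearMap.sub_apply, inner_sub_right] at this
  linarith

theorem toEuclideanLin_apply_toEuclideanLin_inv {H : Matrix n n ℝ} (hH : IsUnit H)
    (v : EuclideanSpace ℝ n) : toEuclideanLin H (toEuclideanLin H⁻¹ v) = v := by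
  have := congrArg (fun A => toEuclideanCLM (n := n) (𝕜 := ℝ) A v)
    (mul_nonsing_inv H ((isUnit_iff_isUnit_det H).mp hH))
  rw [map_mul, map_one] at this
  exact this

theorem inner_toEuclideanLin_add_smul_le_of_lipschitz
    {Hess : EuclideanSpace ℝ n → Matrix n n ℝ} {L : ℝ}
    (hLip : ∀ x y, ‖toEuclideanCLM (𝕜 := ℝ) (Hess x - Hess y)‖ ≤ L * ‖x - y‖)
    (x v : EuclideanSpace ℝ n) {t : ℝ} (ht : 0 ≤ t) :
    ⟪v, toEuclideanLin (Hess (x + t • v)) v⟫_ℝ ≤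
      ⟪v, toEuclideanLin (Hess x) v⟫_ℝ + L * ‖v‖ ^ 3 * t := by
  have hT :=
    (toEuclideanCLM (𝕜 := ℝ) (Hess (x + t • v) - Hess x)).real_inner_apply_le_opNorm_mul_sq v
  have hLt := hLip (x + t • v) x
  rw [add_sub_cancel_left, norm_smul, Real.norm_of_nonneg ht] at hLt
  have hnorm : ‖toEuclideanCLM (𝕜 := ℝ) (Hess (x + t • v) - Hess x)‖ * ‖v‖ ^ 2 ≤
      L * ‖v‖ ^ 3 * t :=
    calc _ ≤ L * (t * ‖v‖) * ‖v‖ ^ 2 := by gcongr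
      _ = L * ‖v‖ ^ 3 * t := by ring
  have h := hT.trans hnorm
  rw [map_sub, _root_.sub_apply, inner_sub_right] at h
  exact sub_le_iff_le_add'.mp h

end Matrix

theorem cubic_term_le_of_le_three_mul_sq_div {L m α r G S : ℝ} (hm : 0 < m) (hα : α < 1 / 2)
    (hr : 0 ≤ r) (hS : m * r ^ 2 ≤ S) (hG : m * r ≤ G) (hgrad : G ≤ 3 * m ^ 2 / L * (1 - 2 * α)) :
    L * r ^ 3 / 6 ≤ (1 / 2 - α) * S := by
  have hS0 : 0 ≤ S := (by positivity : 0 ≤ m * r ^ 2).trans hS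
  rcases le_or_gt L 0 with hL | hL
  · nlinarith [pow_nonneg hr 3]
  · have hLr : L * r ≤ 3 * m * (1 - 2 * α) := by
      have h : L * (m * r) ≤ 3 * m ^ 2 * (1 - 2 * α) := by
        calc L * (m * r) ≤ L * G := by gcongr
          _ ≤ L * (3 * m ^ 2 / L * (1 - 2 * α)) := by gcongr
          _ = 3 * m ^ 2 * (1 - 2 * α) := by field_simp
      nlinarith
    nlinarith [mul_le_mul_of_nonneg_right hLr (sq_nonneg r)]

theorem ncn_unit_step_armijo_general {n : ℕ}
    (f : EuclideanSpace ℝ (Fin n) → ℝ) (L m α : ℝ)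
    (Hess : EuclideanSpace ℝ (Fin n) → Matrix (Fin n) (Fin n) ℝ)
    (hf : ContDiff ℝ 2 f)
    (hHessf : ∀ y u v, iteratedFDeriv ℝ 2 f y ![u, v] = ⟪u, Matrix.toEuclideanLin (Hess y) v⟫_ℝ)
    (hLip : ∀ x y, ‖Matrix.toEuclideanCLM (𝕜 := ℝ) (Hess x - Hess y)‖ ≤ L * ‖x - y‖)
    (hm : 0 < m) (hα : α ∈ Set.Ioo (0 : ℝ) (1/2))
    (x : EuclideanSpace ℝ (Fin n))
    (H : Matrix (Fin n) (Fin n) ℝ)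
    (hlow : (H - m • (1 : Matrix (Fin n) (Fin n) ℝ)).PosSemidef)
    (hHx : (H - Hess x).PosSemidef)
    (hgrad : ‖gradient f x‖ ≤ 3 * m ^ 2 / L * (1 - 2 * α)) :
    f (x + -(Matrix.toEuclideanLin H⁻¹ (gradient f x))) ≤
      f x + α * ⟪gradient f x, -(Matrix.toEuclideanLin H⁻¹ (gradient f x))⟫_ℝ := by
  set g := gradient f x
  set Δ := -(Matrix.toEuclideanLin H⁻¹ g)
  have hH : H.PosDef := by
    simpa using Matrix.PosDef.posSemidef_add hlow (Matrix.PosDef.one.smul hm)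
  have hHΔ : Matrix.toEuclideanLin H Δ = -g := by
    rw [map_neg, Matrix.toEuclideanLin_apply_toEuclideanLin_inv hH.isUnit]
  clear_value Δ
  have hgΔ : ⟪g, Δ⟫_ℝ = -⟪Δ, Matrix.toEuclideanLin H Δ⟫_ℝ := by
    rw [hHΔ, inner_neg_right, neg_neg, real_inner_comm]
  have hmS : m * ‖Δ‖ ^ 2 ≤ ⟪Δ, Matrix.toEuclideanLin H Δ⟫_ℝ := by
    simpa [real_inner_smul_right, real_inner_self_eq_norm_sq]
      using hlow.inner_toEuclideanLin_le Δ
  have hmΔ : m * ‖Δ‖ ≤ ‖g‖ := by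
    simpa [hHΔ] using mul_norm_le_norm_of_mul_sq_le_inner hmS
  have htaylor := hf.le_taylor_two_of_iteratedFDeriv_le x Δ (C := L * ‖Δ‖ ^ 3) fun t ht => by
    simpa only [hHessf] using Matrix.inner_toEuclideanLin_add_smul_le_of_lipschitz hLip x Δ ht.1
  rw [hHessf, ← inner_gradient_left, hgΔ] at htaylor
  rw [hgΔ]
  linarith [hHx.inner_toEuclideanLin_le Δ,
    cubic_term_le_of_le_three_mul_sq_div hm hα.2 (norm_nonneg Δ) hmS hmΔ hgrad]

/-- Unit step size satisfies the Armijo condition for the Nonconvex Newton step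
`Δx = -H⁻¹∇f(x)`: if `f` is twice continuously differentiable with `L`-Lipschitz Hessian,
`H` is symmetric with `m·I ⪯ H` and `∇²f(x) ⪯ H`, `α ∈ (0, 1/2)`, and
`‖∇f(x)‖ ≤ (3m²/L)(1 - 2α)`, then `f(x + Δx) ≤ f(x) + α⟨∇f(x), Δx⟩`.
Here `Hess y` is the Hessian matrix of `f` at `y`, characterized by
`⟪u, Hess y v⟫ = D²f(y)[u, v]`. -/
theorem ncn_unit_step_armijo {n : ℕ}
    (f : EuclideanSpace ℝ (Fin n) → ℝ) (L m α : ℝ)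
    (Hess : EuclideanSpace ℝ (Fin n) → Matrix (Fin n) (Fin n) ℝ)
    (hf : ContDiff ℝ 2 f)
    (hHessf : ∀ y u v, iteratedFDeriv ℝ 2 f y ![u, v] = ⟪u, Matrix.toEuclideanLin (Hess y) v⟫_ℝ)
    (hLip : ∀ x y, ‖Matrix.toEuclideanCLM (𝕜 := ℝ) (Hess x - Hess y)‖ ≤ L * ‖x - y‖)
    (hm : 0 < m) (hα : α ∈ Set.Ioo (0 : ℝ) (1/2))
    (x : EuclideanSpace ℝ (Fin n))
    (H : Matrix (Fin n) (Fin n) ℝ) (hH : H.IsHermitian)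
    (hlow : (H - m • (1 : Matrix (Fin n) (Fin n) ℝ)).PosSemidef)
    (hHx : (H - Hess x).PosSemidef)
    (hgrad : ‖gradient f x‖ ≤ 3 * m ^ 2 / L * (1 - 2 * α)) :
    f (x + -(Matrix.toEuclideanLin H⁻¹ (gradient f x))) ≤
      f x + α * ⟪gradient f x, -(Matrix.toEuclideanLin H⁻¹ (gradient f x))⟫_ℝ :=
  ncn_unit_step_armijo_general f L m α Hess hf hHessf hLip hm hα x H hlow hHx hgrad
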